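/- arXiv:2506.06848 — 2 statements merged into one kernel-verified Lean document; each statement's English description precedes it below -/
import Mathlib

section
/- Blackwell improvements lower the interim belief under threshold play: let E = ({l,h}, p_L, p_H) and E' = ({l',h'}, p'_L, p'_H) be binary experiments with E' Blackwell more informative than E, i.e. p'_H(l')·p_L(l) ≤ p_H(l)·p'_L(l) (weakly stronger bad news) and p'_H(h')·p_L(h) ≥ p_H(h)·p'_L(h) (weakly stronger good news). Let σ_1 be the strategy for E with σ_1(l) = 0, σ_1(h) = 1, and σ'_1 the analogous strategy for E'. Then Ψ'(σ'_1) ≤ Ψ(σ_1). -/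
/-!
Under the threshold strategy a buyer rejects exactly on the low signal, so the interim belief
only depends on the ratio `G b / G a`, where `G x = ∑ k < n, x ^ k` and `a`, `b` are the
probabilities of the low signal in states `L`, `H`. The two Blackwell conditions say precisely
that `E` is a garbling of `E'`: `(a, b) = c + t • (a', b')` with `c, t ≥ 0` and `c + t ≤ 1`.
Expanding `G (c + t x)` in powers of `x` gives coefficients that decrease with the power when
`c + t ≤ 1`. Since the weights `A ^ i` dominate `B ^ i` in likelihood ratio when `B ≤ A`, they
give a decreasing sequence a smaller average (a weighted Chebyshev inequality), whence
`G (c + t A) * G B ≤ G A * G (c + t B)`.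
-/

open Finset Filter Topology

noncomputable section

/-- Probability that a single buyer rejects the seller, given conditional signal
distribution `p` and strategy `σ`: `r_θ(σ) = 1 - Σ_s p_θ(s)·σ(s)`. -/
def rej {m : ℕ} (p σ : Fin m → ℝ) : ℝ := 1 - ∑ s, p s * σ s

/-- `ν_θ(σ) = (1/n)·Σ_{k=0}^{n-1} r_θ(σ)^k`: probability of being visited. -/
def visit (n : ℕ) {m : ℕ} (p σ : Fin m → ℝ) : ℝ :=
  (1 / (n : ℝ)) * ∑ k ∈ Finset.range n, rej p σ ^ k

/-- Interim belief `Ψ(σ) = ρ·ν_H(σ) / (ρ·ν_H(σ) + (1-ρ)·ν_L(σ))`. -/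
def interim (ρ : ℝ) (n : ℕ) {m : ℕ} (pL pH σ : Fin m → ℝ) : ℝ :=
  ρ * visit n pH σ / (ρ * visit n pH σ + (1 - ρ) * visit n pL σ)

/-- Posterior belief `Q_ψ(s) = ψ·p_H(s) / (ψ·p_H(s) + (1-ψ)·p_L(s))`. -/
def post {m : ℕ} (ψ : ℝ) (pL pH : Fin m → ℝ) (s : Fin m) : ℝ :=
  ψ * pH s / (ψ * pH s + (1 - ψ) * pL s)

/-- A strategy maps each signal to an acceptance probability in `[0,1]`. -/
def IsStrategy {m : ℕ} (σ : Fin m → ℝ) : Prop := ∀ s, 0 ≤ σ s ∧ σ s ≤ 1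

/-- `σ` is an equilibrium strategy: with `ψ* = Ψ(σ)`, accept for sure when the
posterior exceeds `c`, reject for sure when it falls below `c`. -/
def IsEquilibrium (ρ c : ℝ) (n : ℕ) {m : ℕ} (pL pH σ : Fin m → ℝ) : Prop :=
  IsStrategy σ ∧
  ∀ s : Fin m,
    (c < post (interim ρ n pL pH σ) pL pH s → σ s = 1) ∧
    (post (interim ρ n pL pH σ) pL pH s < c → σ s = 0)

/-- Total surplus `Π(σ) = (1-c)·ρ·(1-r_H(σ)^n) - c·(1-ρ)·(1-r_L(σ)^n)`. -/
def surplus (ρ c : ℝ) (n : ℕ) {m : ℕ} (pL pH σ : Fin m → ℝ) : ℝ :=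
  (1 - c) * ρ * (1 - rej pH σ ^ n) - c * (1 - ρ) * (1 - rej pL σ ^ n)

/-- The most selective equilibrium strategy. -/
def MostSelective (ρ c : ℝ) (n : ℕ) {m : ℕ} (pL pH σ : Fin m → ℝ) : Prop :=
  IsEquilibrium ρ c n pL pH σ ∧
  ∀ σ' : Fin m → ℝ, IsEquilibrium ρ c n pL pH σ' → ∀ s, σ s ≤ σ' s

/-- The least selective equilibrium strategy. -/
def LeastSelective (ρ c : ℝ) (n : ℕ) {m : ℕ} (pL pH σ : Fin m → ℝ) : Prop :=
  IsEquilibrium ρ c n pL pH σ ∧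
  ∀ σ' : Fin m → ℝ, IsEquilibrium ρ c n pL pH σ' → ∀ s, σ' s ≤ σ s

/-- An experiment: `p_L, p_H` are probability mass functions with full joint support,
indexed so that likelihood ratios are nondecreasing. -/
def IsExperiment {m : ℕ} (pL pH : Fin m → ℝ) : Prop :=
  (∀ s, 0 ≤ pL s) ∧ (∀ s, 0 ≤ pH s) ∧
  (∑ s, pL s = 1) ∧ (∑ s, pH s = 1) ∧
  (∀ s, 0 < pL s + pH s) ∧
  (∀ i j : Fin m, i ≤ j → pH i * pL j ≤ pH j * pL i)

/-- A strategy is monotone: a positive acceptance probability at `s_i` forces sure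
acceptance at every signal with strictly higher likelihood ratio. -/
def MonotoneStrategy {m : ℕ} (pL pH σ : Fin m → ℝ) : Prop :=
  ∀ i j : Fin m, 0 < σ i → pH i * pL j < pH j * pL i → σ j = 1

theorem sum_mul_sum_le_sum_mul_sum_of_antitone {ι : Type*} [LinearOrder ι] (s : Finset ι)
    {w u v : ι → ℝ} (hw : Antitone w) (huv : ∀ i k, i ≤ k → u i * v k ≤ v i * u k) :
    (∑ i ∈ s, w i * u i) * ∑ k ∈ s, v k ≤ (∑ i ∈ s, w i * v i) * ∑ k ∈ s, u k := by
  have hterm : ∀ i k, 0 ≤ (w i - w k) * (v i * u k - u i * v k) := by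
    intro i k
    rcases le_total i k with h | h
    · exact mul_nonneg (sub_nonneg.2 (hw h)) (by linarith [huv i k h])
    · exact mul_nonneg_of_nonpos_of_nonpos (sub_nonpos.2 (hw h)) (by linarith [huv k i h])
  have hdiff : (∑ i ∈ s, w i * v i) * ∑ k ∈ s, u k - (∑ i ∈ s, w i * u i) * ∑ k ∈ s, v k
      = ∑ i ∈ s, ∑ k ∈ s, (w i * v i * u k - w i * u i * v k) := by
    simp only [sum_mul_sum, ← sum_sub_distrib]
  have hpair : ∑ i ∈ s, ∑ k ∈ s, (w i - w k) * (v i * u k - u i * v k)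
      = ∑ i ∈ s, ∑ k ∈ s, (w i * v i * u k - w i * u i * v k)
        + ∑ i ∈ s, ∑ k ∈ s, (w i * v i * u k - w i * u i * v k) := by
    nth_rw 2 [sum_comm]
    rw [← sum_add_distrib]
    refine sum_congr rfl fun i _ => ?_
    rw [← sum_add_distrib]
    exact sum_congr rfl fun k _ => by ring
  have := sum_nonneg fun i (_ : i ∈ s) => sum_nonneg fun k (_ : k ∈ s) => hterm i k
  linarith

/-- A partial sum of the series of `(1 - c)⁻¹ ^ (i + 1)`. -/
def truncNegBinomial (c : ℝ) (i m : ℕ) : ℝ := ∑ d ∈ range m, ((i + d).choose d : ℝ) * c ^ d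

lemma truncNegBinomial_nonneg {c : ℝ} (hc : 0 ≤ c) (i m : ℕ) : 0 ≤ truncNegBinomial c i m :=
  sum_nonneg fun _ _ => by positivity

lemma truncNegBinomial_succ (c : ℝ) (i m : ℕ) :
    truncNegBinomial c i (m + 1)
      = (1 - c) * truncNegBinomial c (i + 1) m + ((i + m + 1).choose m : ℝ) * c ^ m := by
  induction m with
  | zero => simp [truncNegBinomial]
  | succ m ih =>
    have hpascal : ((i + (m + 1) + 1).choose (m + 1) : ℝ)
        = ((i + m + 1).choose m : ℝ) + ((i + (m + 1)).choose (m + 1) : ℝ) := by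
      rw [show i + (m + 1) + 1 = (i + m + 1) + 1 by ring, Nat.choose_succ_succ,
        show i + (m + 1) = i + m + 1 by ring]
      push_cast; ring
    have hsplit : truncNegBinomial c (i + 1) (m + 1)
        = truncNegBinomial c (i + 1) m + ((i + m + 1).choose m : ℝ) * c ^ m := by
      rw [truncNegBinomial, sum_range_succ, ← truncNegBinomial, add_right_comm i 1 m]
    rw [truncNegBinomial, sum_range_succ, ← truncNegBinomial, ih, hsplit, hpascal]
    ring

lemma geom_sum_affine (n : ℕ) (c t x : ℝ) :
    ∑ j ∈ range n, (c + t * x) ^ j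
      = ∑ i ∈ range n, t ^ i * truncNegBinomial c i (n - i) * x ^ i := by
  calc ∑ j ∈ range n, (c + t * x) ^ j
      = ∑ j ∈ Ico 0 n, ∑ i ∈ Ico 0 (j + 1), (t * x) ^ i * c ^ (j - i) * (j.choose i : ℝ) := by
        simp only [← range_eq_Ico, add_comm c, add_pow]
    _ = ∑ i ∈ Ico 0 n, ∑ j ∈ Ico i n, (t * x) ^ i * c ^ (j - i) * (j.choose i : ℝ) :=
        (sum_Ico_Ico_comm 0 n _).symm
    _ = ∑ i ∈ range n, t ^ i * truncNegBinomial c i (n - i) * x ^ i := by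
        rw [← range_eq_Ico]
        refine sum_congr rfl fun i _ => ?_
        rw [sum_Ico_eq_sum_range, truncNegBinomial, mul_sum, sum_mul]
        refine sum_congr rfl fun d _ => ?_
        rw [Nat.add_sub_cancel_left, Nat.choose_symm_add]
        ring

lemma antitone_affine_geom_coeff {c t : ℝ} (hc : 0 ≤ c) (ht : 0 ≤ t) (hct : c + t ≤ 1) (n : ℕ) :
    Antitone fun i => t ^ i * truncNegBinomial c i (n - i) := by
  refine antitone_nat_of_succ_le fun i => ?_
  rcases lt_or_ge i n with hin | hni
  · obtain ⟨m, hm⟩ : ∃ m, n - i = m + 1 := ⟨n - (i + 1), by omega⟩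
    have hstep : t * truncNegBinomial c (i + 1) m ≤ truncNegBinomial c i (m + 1) := by
      have := truncNegBinomial_nonneg hc (i + 1) m
      calc t * truncNegBinomial c (i + 1) m ≤ (1 - c) * truncNegBinomial c (i + 1) m := by
            gcongr; linarith
        _ ≤ truncNegBinomial c i (m + 1) := by
            rw [truncNegBinomial_succ]; exact le_add_of_nonneg_right (by positivity)
    rw [hm, show n - (i + 1) = m by omega, pow_succ, mul_assoc]
    gcongr
  · simp [truncNegBinomial, show n - i = 0 by omega, show n - (i + 1) = 0 by omega]

lemma pow_mul_pow_le_pow_mul_pow {A B : ℝ} (hB : 0 ≤ B) (hBA : B ≤ A) {i k : ℕ} (hik : i ≤ k) :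
    A ^ i * B ^ k ≤ B ^ i * A ^ k := by
  obtain ⟨d, rfl⟩ := Nat.exists_eq_add_of_le hik
  calc A ^ i * B ^ (i + d) = B ^ i * (A ^ i * B ^ d) := by ring
    _ ≤ B ^ i * (A ^ i * A ^ d) := by have := hB.trans hBA; gcongr
    _ = B ^ i * A ^ (i + d) := by ring

lemma geom_sum_affine_mul_le (n : ℕ) {A B c t : ℝ} (hB : 0 ≤ B) (hBA : B ≤ A)
    (hc : 0 ≤ c) (ht : 0 ≤ t) (hct : c + t ≤ 1) :
    (∑ j ∈ range n, (c + t * A) ^ j) * ∑ k ∈ range n, B ^ k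
      ≤ (∑ j ∈ range n, A ^ j) * ∑ k ∈ range n, (c + t * B) ^ k := by
  rw [geom_sum_affine n c t A, geom_sum_affine n c t B, mul_comm (∑ j ∈ range n, A ^ j)]
  exact sum_mul_sum_le_sum_mul_sum_of_antitone _ (antitone_affine_geom_coeff hc ht hct n)
    fun i k hik => pow_mul_pow_le_pow_mul_pow hB hBA hik

lemma exists_affine_garbling {a b a' b' : ℝ} (ha₀ : 0 ≤ a) (ha₁ : a ≤ 1) (hba : b ≤ a)
    (hba' : b' ≤ a') (hbad : b' * a ≤ b * a') (hgood : (1 - b) * (1 - a') ≤ (1 - b') * (1 - a)) :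
    ∃ c t : ℝ, 0 ≤ c ∧ 0 ≤ t ∧ c + t ≤ 1 ∧ a = c + t * a' ∧ b = c + t * b' := by
  rcases hba'.lt_or_eq with hlt | heq
  · have hd : 0 < a' - b' := sub_pos.2 hlt
    refine ⟨(a' * b - a * b') / (a' - b'), (a - b) / (a' - b'),
      div_nonneg (by linarith) hd.le, div_nonneg (by linarith) hd.le, ?_, ?_, ?_⟩
    · rw [← add_div, div_le_one hd]; linarith
    · field_simp; ring
    · field_simp; ring
  · subst heq
    have : a = b := by nlinarith
    exact ⟨a, 0, ha₀, le_rfl, by simpa using ha₁, by ring, by rw [this]; ring⟩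

lemma bayes_le_bayes_of_mul_le {ρ x y x' y' : ℝ} (hρ : ρ ∈ Set.Ioo (0 : ℝ) 1) (hx : 0 ≤ x)
    (hy : 0 < y) (hx' : 0 ≤ x') (hy' : 0 < y') (h : y' * x ≤ y * x') :
    ρ * y' / (ρ * y' + (1 - ρ) * x') ≤ ρ * y / (ρ * y + (1 - ρ) * x) := by
  obtain ⟨hρ₀, hρ₁⟩ := hρ
  have hρ₁' : 0 < 1 - ρ := sub_pos.2 hρ₁
  rw [div_le_div_iff₀ (by positivity) (by positivity)]
  have := mul_le_mul_of_nonneg_left h (mul_nonneg hρ₀.le hρ₁'.le)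
  linear_combination this

lemma IsExperiment.pH_zero_le_pL_zero {pL pH : Fin 2 → ℝ} (h : IsExperiment pL pH) :
    pH 0 ≤ pL 0 := by
  obtain ⟨-, -, hL, hH, -, hmlr⟩ := h
  rw [Fin.sum_univ_two] at hL hH
  have h01 := hmlr 0 1 (by decide)
  rw [show pL 1 = 1 - pL 0 by linarith, show pH 1 = 1 - pH 0 by linarith] at h01
  linarith

lemma rej_threshold {p : Fin 2 → ℝ} (hp : ∑ s, p s = 1) :
    rej p (fun s => if s = 0 then (0 : ℝ) else 1) = p 0 := by
  rw [Fin.sum_univ_two] at hp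
  simp [rej, Fin.sum_univ_two]
  linarith

lemma interim_threshold_le {ρ : ℝ} (hρ : ρ ∈ Set.Ioo (0 : ℝ) 1) {n : ℕ} (hn : 1 ≤ n)
    {pL pH qL qH : Fin 2 → ℝ} (hE : IsExperiment pL pH) (hE' : IsExperiment qL qH)
    (h : (∑ k ∈ range n, pL 0 ^ k) * ∑ k ∈ range n, qH 0 ^ k
      ≤ (∑ k ∈ range n, qL 0 ^ k) * ∑ k ∈ range n, pH 0 ^ k) :
    interim ρ n qL qH (fun s => if s = 0 then (0 : ℝ) else 1) ≤
      interim ρ n pL pH (fun s => if s = 0 then (0 : ℝ) else 1) := by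
  obtain ⟨hpL, hpH, hpLs, hpHs, -⟩ := hE
  obtain ⟨hqL, hqH, hqLs, hqHs, -⟩ := hE'
  have hG : ∀ x : ℝ, 0 ≤ x → 0 < 1 / (n : ℝ) * ∑ k ∈ range n, x ^ k := fun x hx =>
    mul_pos (by positivity) (geom_sum_pos hx (by omega))
  simp only [interim, visit, rej_threshold hpLs, rej_threshold hpHs, rej_threshold hqLs,
    rej_threshold hqHs]
  refine bayes_le_bayes_of_mul_le hρ (hG _ (hpL 0)).le (hG _ (hpH 0)) (hG _ (hqL 0)).le
    (hG _ (hqH 0)) ?_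
  calc _ = (1 / (n : ℝ)) ^ 2 * ((∑ k ∈ range n, pL 0 ^ k) * ∑ k ∈ range n, qH 0 ^ k) := by ring
    _ ≤ (1 / (n : ℝ)) ^ 2 * ((∑ k ∈ range n, qL 0 ^ k) * ∑ k ∈ range n, pH 0 ^ k) := by gcongr
    _ = _ := by ring

/-- a Blackwell improvement lowers the interim belief under threshold
play. For binary experiments with `E' = (qL, qH)` delivering weakly stronger bad news
and weakly stronger good news than `E = (pL, pH)`, and `σ₁` the strategy rejecting on
the low signal `0` and accepting on the high signal `1`: `Ψ'(σ₁) ≤ Ψ(σ₁)`. -/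
theorem blackwell_lowers_interim_belief
    (ρ : ℝ) (hρ : ρ ∈ Set.Ioo (0:ℝ) 1)
    (n : ℕ) (hn : 1 ≤ n)
    (pL pH qL qH : Fin 2 → ℝ)
    (hE : IsExperiment pL pH) (hE' : IsExperiment qL qH)
    (hbad : qH 0 * pL 0 ≤ pH 0 * qL 0)
    (hgood : pH 1 * qL 1 ≤ qH 1 * pL 1) :
    interim ρ n qL qH (fun s => if s = 0 then (0:ℝ) else 1) ≤
      interim ρ n pL pH (fun s => if s = 0 then (0:ℝ) else 1) := by
  have ⟨hpL, _, hpLs, hpHs, _⟩ := hE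
  have ⟨_, hqH, hqLs, hqHs, _⟩ := hE'
  rw [Fin.sum_univ_two] at hpLs hpHs hqLs hqHs
  obtain ⟨c, t, hc, ht, hct, ha, hb⟩ :=
    exists_affine_garbling (hpL 0) (by linarith [hpL 1]) hE.pH_zero_le_pL_zero
      hE'.pH_zero_le_pL_zero hbad (by convert hgood using 2 <;> linarith)
  refine interim_threshold_le hρ hn hE hE' ?_
  have key := geom_sum_affine_mul_le n (hqH 0) hE'.pH_zero_le_pL_zero hc ht hct
  rwa [← ha, ← hb] at key
end
end

section
/- Locating equilibria relative to threshold strategies: for j ∈ {1, …, m} let σ_j be the threshold strategy with σ_j(s_i) = 0 for i < j and σ_j(s_i) = 1 for i ≥ j, and let ψ_j = Ψ(σ_j). Suppose σ_j is not itself an equilibrium strategy. Then: (i) if Q_{ψ_j}(s_j) < c, there exists an equilibrium strategy σ* that is more selective than σ_j (σ*(s) ≤ σ_j(s) for all s ∈ S); (ii) if j ≥ 2 and Q_{ψ_j}(s_{j−1}) > c, there exists an equilibrium strategy σ* that is less selective than σ_j (σ_j(s) ≤ σ*(s) for all s ∈ S). -/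
open Finset Filter Topology

noncomputable section

namespace EqAux

/-- Threshold strategy: reject below `k`, accept from `k` on. -/
def thr (m k : ℕ) : Fin m → ℝ := fun i => if (i : ℕ) < k then 0 else 1

/-- Threshold strategy with mixing at `k`. -/
def mixs (m k : ℕ) (x : ℝ) : Fin m → ℝ :=
  fun i => if (i : ℕ) < k then 0 else if (i : ℕ) = k then 1 - x else 1

lemma mixs_zero (m k : ℕ) : mixs m k 0 = thr m k := by
  funext i; unfold mixs thr
  rcases lt_trichotomy (i : ℕ) k with h | h | h
  · simp [h]
  · simp [h]
  · simp [Nat.lt_asymm h, h.ne', not_lt.mpr h.le]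

lemma mixs_one (m k : ℕ) : mixs m k 1 = thr m (k + 1) := by
  funext i; unfold mixs thr
  rcases lt_trichotomy (i : ℕ) k with h | h | h
  · simp [h, Nat.lt_succ_of_lt h]
  · simp [h]
  · have h1 : ¬ (i : ℕ) < k := not_lt.mpr h.le
    have h2 : ¬ (i : ℕ) < k + 1 := by omega
    simp [h1, h2, h.ne']

lemma thr_mono {m k k' : ℕ} (h : k ≤ k') (s : Fin m) : thr m k' s ≤ thr m k s := by
  unfold thr
  by_cases h1 : (s : ℕ) < k'
  · by_cases h2 : (s : ℕ) < k <;> simp [h1, h2]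
  · have h2 : ¬ (s : ℕ) < k := by omega
    simp [h1, h2]

lemma isStrategy_thr (m k : ℕ) : IsStrategy (thr m k) := by
  intro s; unfold thr; split_ifs <;> norm_num

lemma isStrategy_mixs (m k : ℕ) {x : ℝ} (hx : x ∈ Set.Icc (0:ℝ) 1) :
    IsStrategy (mixs m k x) := by
  intro s; unfold mixs; split_ifs <;> constructor <;> linarith [hx.1, hx.2]

lemma rej_mem {m : ℕ} (p σ : Fin m → ℝ) (hp : ∀ s, 0 ≤ p s) (hps : ∑ s, p s = 1)
    (hσ : IsStrategy σ) : rej p σ ∈ Set.Icc (0:ℝ) 1 := by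
  unfold rej
  constructor
  · have h1 : ∑ s, p s * σ s ≤ ∑ s, p s :=
      Finset.sum_le_sum fun s _ => mul_le_of_le_one_right (hp s) (hσ s).2
    rw [hps] at h1; linarith
  · have h2 : 0 ≤ ∑ s, p s * σ s :=
      Finset.sum_nonneg fun s _ => mul_nonneg (hp s) (hσ s).1
    linarith

lemma visit_pos {m : ℕ} {n : ℕ} (hn : 1 ≤ n) (p σ : Fin m → ℝ) (hr : 0 ≤ rej p σ) :
    0 < visit n p σ := by
  unfold visit
  have h1 : (1:ℝ) ≤ ∑ k ∈ Finset.range n, rej p σ ^ k := by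
    calc (1:ℝ) = rej p σ ^ 0 := by simp
    _ ≤ ∑ k ∈ Finset.range n, rej p σ ^ k :=
      Finset.single_le_sum (f := fun k => rej p σ ^ k) (fun k _ => pow_nonneg hr k)
        (Finset.mem_range.mpr hn)
  have hn' : (0:ℝ) < (n:ℝ) := by exact_mod_cast hn
  have : (0:ℝ) < 1 / (n:ℝ) := by positivity
  nlinarith

lemma interim_mem {m : ℕ} {ρ : ℝ} (hρ : ρ ∈ Set.Ioo (0:ℝ) 1) {n : ℕ} (hn : 1 ≤ n)
    {pL pH : Fin m → ℝ} (hE : IsExperiment pL pH) {σ : Fin m → ℝ} (hσ : IsStrategy σ) :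
    interim ρ n pL pH σ ∈ Set.Ioo (0:ℝ) 1 := by
  obtain ⟨hL, hH, hLs, hHs, _, _⟩ := hE
  have hvL : 0 < visit n pL σ := visit_pos hn pL σ (rej_mem pL σ hL hLs hσ).1
  have hvH : 0 < visit n pH σ := visit_pos hn pH σ (rej_mem pH σ hH hHs hσ).1
  have hnum : 0 < ρ * visit n pH σ := mul_pos hρ.1 hvH
  have hL' : 0 < (1 - ρ) * visit n pL σ := mul_pos (by linarith [hρ.2]) hvL
  unfold interim
  constructor
  · exact div_pos hnum (by linarith)
  · rw [div_lt_one (by linarith)]; linarith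

lemma post_den_pos {m : ℕ} {ψ : ℝ} (hψ : ψ ∈ Set.Ioo (0:ℝ) 1) {pL pH : Fin m → ℝ}
    (hL : ∀ s, 0 ≤ pL s) (hH : ∀ s, 0 ≤ pH s) (hsupp : ∀ s, 0 < pL s + pH s)
    (s : Fin m) : 0 < ψ * pH s + (1 - ψ) * pL s := by
  rcases lt_or_ge 0 (pH s) with h | h
  · have h1 : 0 < ψ * pH s := mul_pos hψ.1 h
    have h2 : 0 ≤ (1 - ψ) * pL s := mul_nonneg (by linarith [hψ.2]) (hL s)
    linarith
  · have hh : pH s = 0 := le_antisymm h (hH s)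
    have hpl : 0 < pL s := by have := hsupp s; linarith
    have h1 : 0 < (1 - ψ) * pL s := mul_pos (by linarith [hψ.2]) hpl
    nlinarith [mul_nonneg hψ.1.le (hH s)]

lemma post_mono {m : ℕ} {ψ : ℝ} (hψ : ψ ∈ Set.Ioo (0:ℝ) 1) {pL pH : Fin m → ℝ}
    (hE : IsExperiment pL pH) {i j : Fin m} (hij : i ≤ j) :
    post ψ pL pH i ≤ post ψ pL pH j := by
  obtain ⟨hL, hH, _, _, hsupp, hml⟩ := hE
  have di := post_den_pos hψ hL hH hsupp i
  have dj := post_den_pos hψ hL hH hsupp j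
  unfold post
  rw [div_le_div_iff₀ di dj]
  have hml' := hml i j hij
  have hpos : (0:ℝ) < ψ * (1 - ψ) := mul_pos hψ.1 (by linarith [hψ.2])
  nlinarith [mul_le_mul_of_nonneg_left hml' hpos.le]

lemma eq_crit {m : ℕ} (ρ c : ℝ) (n : ℕ) (pL pH : Fin m → ℝ) {σ : Fin m → ℝ}
    (hσ : IsStrategy σ)
    (h1 : ∀ s, σ s ≠ 1 → post (interim ρ n pL pH σ) pL pH s ≤ c)
    (h0 : ∀ s, σ s ≠ 0 → c ≤ post (interim ρ n pL pH σ) pL pH s) :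
    IsEquilibrium ρ c n pL pH σ := by
  refine ⟨hσ, fun s => ⟨?_, ?_⟩⟩
  · intro h; by_contra hne; exact absurd (h1 s hne) (not_le.mpr h)
  · intro h; by_contra hne; exact absurd (h0 s hne) (not_le.mpr h)

end EqAux
namespace EqAux

lemma cont_post {m : ℕ} {ρ : ℝ} (hρ : ρ ∈ Set.Ioo (0:ℝ) 1) {n : ℕ} (hn : 1 ≤ n)
    {pL pH : Fin m → ℝ} (hE : IsExperiment pL pH) (k : ℕ) (s : Fin m) :
    ContinuousOn (fun x => post (interim ρ n pL pH (mixs m k x)) pL pH s)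
      (Set.Icc (0:ℝ) 1) := by
  have hmix : ∀ i : Fin m, Continuous fun x : ℝ => mixs m k x i := by
    intro i; unfold mixs
    by_cases h1 : (i : ℕ) < k
    · simpa [h1] using continuous_const
    · by_cases h2 : (i : ℕ) = k
      · have : (fun x : ℝ => if (i:ℕ) < k then (0:ℝ) else if (i:ℕ) = k then 1 - x else 1) = fun x : ℝ => 1 - x := by
          funext x; simp [h1, h2]
        rw [this]
        exact continuous_const.sub continuous_id
      · simpa [h1, h2] using continuous_const
  have hrej : ∀ p : Fin m → ℝ, Continuous fun x => rej p (mixs m k x) := by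
    intro p; unfold rej
    exact continuous_const.sub
      (continuous_finset_sum _ fun i _ => continuous_const.mul (hmix i))
  have hvisit : ∀ p : Fin m → ℝ, Continuous fun x => visit n p (mixs m k x) := by
    intro p; unfold visit
    exact continuous_const.mul (continuous_finset_sum _ fun k' _ => (hrej p).pow k')
  have hstrat : ∀ x ∈ Set.Icc (0:ℝ) 1, IsStrategy (mixs m k x) :=
    fun x hx => isStrategy_mixs m k hx
  have hImem : ∀ x ∈ Set.Icc (0:ℝ) 1,
      interim ρ n pL pH (mixs m k x) ∈ Set.Ioo (0:ℝ) 1 :=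
    fun x hx => interim_mem hρ hn hE (hstrat x hx)
  have hden : ∀ x ∈ Set.Icc (0:ℝ) 1,
      ρ * visit n pH (mixs m k x) + (1 - ρ) * visit n pL (mixs m k x) ≠ 0 := by
    intro x hx
    obtain ⟨hL, hH, hLs, hHs, _, _⟩ := hE
    have hvL : 0 < visit n pL (mixs m k x) :=
      visit_pos hn pL _ (rej_mem pL _ hL hLs (hstrat x hx)).1
    have hvH : 0 < visit n pH (mixs m k x) :=
      visit_pos hn pH _ (rej_mem pH _ hH hHs (hstrat x hx)).1
    have h1 : 0 < ρ * visit n pH (mixs m k x) := mul_pos hρ.1 hvH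
    have h2 : 0 < (1 - ρ) * visit n pL (mixs m k x) := mul_pos (by linarith [hρ.2]) hvL
    positivity
  have hI : ContinuousOn (fun x => interim ρ n pL pH (mixs m k x)) (Set.Icc 0 1) := by
    unfold interim
    exact ContinuousOn.div
      (Continuous.continuousOn (continuous_const.mul (hvisit pH)))
      (Continuous.continuousOn ((continuous_const.mul (hvisit pH)).add
        (continuous_const.mul (hvisit pL)))) hden
  unfold post
  refine ContinuousOn.div (hI.mul continuousOn_const)
    ((hI.mul continuousOn_const).add
      (((continuousOn_const.sub hI).mul continuousOn_const))) ?_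
  intro x hx
  obtain ⟨hL, hH, _, _, hsupp, _⟩ := hE
  exact ne_of_gt (post_den_pos (hImem x hx) hL hH hsupp s)

lemma mixs_eq {m : ℕ} {ρ c : ℝ} (hρ : ρ ∈ Set.Ioo (0:ℝ) 1) {n : ℕ} (hn : 1 ≤ n)
    {pL pH : Fin m → ℝ} (hE : IsExperiment pL pH) {k : ℕ} (hkm : k < m) {x : ℝ}
    (hx : x ∈ Set.Icc (0:ℝ) 1)
    (hc : post (interim ρ n pL pH (mixs m k x)) pL pH ⟨k, hkm⟩ = c) :
    IsEquilibrium ρ c n pL pH (mixs m k x) := by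
  have hσ := isStrategy_mixs m k hx
  have hψ := interim_mem hρ hn hE hσ
  apply eq_crit ρ c n pL pH hσ
  · intro s hs1
    have hs : (s : ℕ) ≤ k := by
      by_contra h
      push_neg at h
      apply hs1
      unfold mixs
      simp [Nat.lt_asymm h, (Nat.lt_iff_le_and_ne.mp h).2.symm]
    calc post (interim ρ n pL pH (mixs m k x)) pL pH s
        ≤ post (interim ρ n pL pH (mixs m k x)) pL pH ⟨k, hkm⟩ :=
          post_mono hψ hE (by exact hs)
      _ = c := hc
  · intro s hs0
    have hs : k ≤ (s : ℕ) := by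
      by_contra h
      push_neg at h
      apply hs0
      unfold mixs
      simp [h]
    calc c = post (interim ρ n pL pH (mixs m k x)) pL pH ⟨k, hkm⟩ := hc.symm
      _ ≤ post (interim ρ n pL pH (mixs m k x)) pL pH s := post_mono hψ hE (by exact hs)

lemma thr_eq {m : ℕ} {ρ c : ℝ} (hρ : ρ ∈ Set.Ioo (0:ℝ) 1) {n : ℕ} (hn : 1 ≤ n)
    {pL pH : Fin m → ℝ} (hE : IsExperiment pL pH) {k : ℕ} (hkm : k ≤ m)
    (h1 : ∀ h : k < m, c ≤ post (interim ρ n pL pH (thr m k)) pL pH ⟨k, h⟩)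
    (h2 : ∀ h : k - 1 < m, 1 ≤ k → post (interim ρ n pL pH (thr m k)) pL pH ⟨k-1, h⟩ ≤ c) :
    IsEquilibrium ρ c n pL pH (thr m k) := by
  have hσ := isStrategy_thr m k
  have hψ := interim_mem hρ hn hE hσ
  apply eq_crit ρ c n pL pH hσ
  · intro s hs1
    have hs : (s : ℕ) < k := by
      by_contra h
      apply hs1; unfold thr; simp [h]
    have hk1 : 1 ≤ k := by omega
    have hk1m : k - 1 < m := by have := s.isLt; omega
    calc post (interim ρ n pL pH (thr m k)) pL pH s
        ≤ post (interim ρ n pL pH (thr m k)) pL pH ⟨k - 1, hk1m⟩ :=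
          post_mono hψ hE (by show (s:ℕ) ≤ k - 1; omega)
      _ ≤ c := h2 hk1m hk1
  · intro s hs0
    have hs : k ≤ (s : ℕ) := by
      by_contra h
      push_neg at h
      apply hs0; unfold thr; simp [h]
    have hkm' : k < m := lt_of_le_of_lt hs s.isLt
    calc c ≤ post (interim ρ n pL pH (thr m k)) pL pH ⟨k, hkm'⟩ := h1 hkm'
      _ ≤ post (interim ρ n pL pH (thr m k)) pL pH s := post_mono hψ hE (by exact hs)

end EqAux
namespace EqAux

lemma down {m : ℕ} {ρ c : ℝ} (hρ : ρ ∈ Set.Ioo (0:ℝ) 1) {n : ℕ} (hn : 1 ≤ n)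
    {pL pH : Fin m → ℝ} (hE : IsExperiment pL pH) :
    ∀ d k (hkm : k < m), m ≤ k + d →
      post (interim ρ n pL pH (thr m k)) pL pH ⟨k, hkm⟩ < c →
      ∃ σs, IsEquilibrium ρ c n pL pH σs ∧ ∀ s, σs s ≤ thr m k s := by
  intro d
  induction d with
  | zero => intro k hkm hle; omega
  | succ d ih =>
    intro k hkm hle hk
    set g : ℝ → ℝ := fun x => post (interim ρ n pL pH (mixs m k x)) pL pH ⟨k, hkm⟩ with hg
    have hg0 : g 0 < c := by
      show post (interim ρ n pL pH (mixs m k 0)) pL pH ⟨k, hkm⟩ < c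
      rw [mixs_zero]; exact hk
    by_cases hcase : c ≤ g 1
    · have hcont : ContinuousOn g (Set.Icc 0 1) := cont_post hρ hn hE k ⟨k, hkm⟩
      have hsub := intermediate_value_Icc (by norm_num : (0:ℝ) ≤ 1) hcont
      obtain ⟨x, hx, hgx⟩ := hsub ⟨hg0.le, hcase⟩
      refine ⟨mixs m k x, mixs_eq hρ hn hE hkm hx hgx, ?_⟩
      intro s
      unfold mixs thr
      split_ifs <;> linarith [hx.1, hx.2]
    · push_neg at hcase
      have hg1 : post (interim ρ n pL pH (thr m (k+1))) pL pH ⟨k, hkm⟩ < c := by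
        rw [← mixs_one]; exact hcase
      by_cases hkm1 : k + 1 < m
      · by_cases hc2 : c ≤ post (interim ρ n pL pH (thr m (k+1))) pL pH ⟨k+1, hkm1⟩
        · refine ⟨thr m (k+1), thr_eq hρ hn hE (by omega) (fun h => hc2) ?_,
            fun s => thr_mono (by omega) s⟩
          intro h h1k
          have : (⟨k + 1 - 1, h⟩ : Fin m) = ⟨k, hkm⟩ := by
            apply Fin.ext; simp
          rw [this]; exact hg1.le
        · push_neg at hc2
          obtain ⟨σs, heq, hle'⟩ := ih (k+1) hkm1 (by omega) hc2
          exact ⟨σs, heq, fun s => (hle' s).trans (thr_mono (by omega) s)⟩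
      · refine ⟨thr m (k+1), thr_eq hρ hn hE (by omega) (fun h => absurd h hkm1) ?_,
          fun s => thr_mono (by omega) s⟩
        intro h h1k
        have : (⟨k + 1 - 1, h⟩ : Fin m) = ⟨k, hkm⟩ := by
          apply Fin.ext; simp
        rw [this]; exact hg1.le

lemma up {m : ℕ} {ρ c : ℝ} (hρ : ρ ∈ Set.Ioo (0:ℝ) 1) {n : ℕ} (hn : 1 ≤ n)
    {pL pH : Fin m → ℝ} (hE : IsExperiment pL pH) :
    ∀ k (hk1 : 1 ≤ k) (hkm : k ≤ m) (hkm' : k - 1 < m),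
      c < post (interim ρ n pL pH (thr m k)) pL pH ⟨k - 1, hkm'⟩ →
      ∃ σs, IsEquilibrium ρ c n pL pH σs ∧ ∀ s, thr m k s ≤ σs s := by
  intro k
  induction k with
  | zero => omega
  | succ k ih =>
    intro hk1 hkm hkm' hk
    have hkm'' : k < m := by omega
    have hidx : (⟨k + 1 - 1, hkm'⟩ : Fin m) = ⟨k, hkm''⟩ := by apply Fin.ext; simp
    rw [hidx] at hk
    set g : ℝ → ℝ := fun x => post (interim ρ n pL pH (mixs m k x)) pL pH ⟨k, hkm''⟩ with hg
    have hg1 : c < g 1 := by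
      show c < post (interim ρ n pL pH (mixs m k 1)) pL pH ⟨k, hkm''⟩
      rw [mixs_one]; exact hk
    by_cases hcase : g 0 ≤ c
    · have hcont : ContinuousOn g (Set.Icc 0 1) := cont_post hρ hn hE k ⟨k, hkm''⟩
      have hsub := intermediate_value_Icc (by norm_num : (0:ℝ) ≤ 1) hcont
      obtain ⟨x, hx, hgx⟩ := hsub ⟨hcase, hg1.le⟩
      refine ⟨mixs m k x, mixs_eq hρ hn hE hkm'' hx hgx, ?_⟩
      intro s
      have hv1 : thr m (k+1) s = if (s:ℕ) < k + 1 then (0:ℝ) else 1 := rfl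
      rcases lt_trichotomy (s : ℕ) k with h | h | h
      · rw [hv1, if_pos (by omega)]
        unfold mixs; rw [if_pos h]
      · rw [hv1, if_pos (by omega)]
        unfold mixs; rw [if_neg (by omega), if_pos h]
        linarith [hx.2]
      · rw [hv1, if_neg (by omega)]
        unfold mixs; rw [if_neg (by omega), if_neg (by omega)]
    · push_neg at hcase
      have hg0 : c < post (interim ρ n pL pH (thr m k)) pL pH ⟨k, hkm''⟩ := by
        rw [← mixs_zero]; exact hcase
      by_cases hk0 : 1 ≤ k
      · have hk1m : k - 1 < m := by omega
        by_cases hc2 : post (interim ρ n pL pH (thr m k)) pL pH ⟨k - 1, hk1m⟩ ≤ c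
        · refine ⟨thr m k, thr_eq hρ hn hE (by omega) (fun h => hg0.le) (fun h h1 => hc2),
            fun s => thr_mono (by omega) s⟩
        · push_neg at hc2
          obtain ⟨σs, heq, hge⟩ := ih hk0 (by omega) hk1m hc2
          exact ⟨σs, heq, fun s => (thr_mono (by omega) s).trans (hge s)⟩
      · have hk00 : k = 0 := by omega
        subst hk00
        refine ⟨thr m 0, thr_eq hρ hn hE (by omega) (fun h => hg0.le)
          (fun h h1 => absurd h1 (by omega)), fun s => thr_mono (by omega) s⟩

end EqAux
/-- locating equilibria relative to threshold strategies. For the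
threshold strategy `σ_j` (reject strictly below `j`, accept from `j` on) with interim
belief `ψ_j`, if `σ_j` is not itself an equilibrium strategy, then: (i) if
`Q_{ψ_j}(s_j) < c` there is an equilibrium strategy more selective than `σ_j`; (ii) if
`j ≥ 2` and `Q_{ψ_j}(s_{j-1}) > c` there is an equilibrium strategy less selective
than `σ_j`. -/
theorem equilibrium_near_threshold
    (ρ c : ℝ) (hρ : ρ ∈ Set.Ioo (0:ℝ) 1) (hc : c ∈ Set.Ioo (0:ℝ) 1)
    (n : ℕ) (hn : 1 ≤ n) (m : ℕ) (hm : 1 ≤ m)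
    (pL pH : Fin m → ℝ) (hE : IsExperiment pL pH)
    (j : Fin m)
    (hne : ¬ IsEquilibrium ρ c n pL pH (fun i => if i < j then (0:ℝ) else 1)) :
    (post (interim ρ n pL pH (fun i => if i < j then (0:ℝ) else 1)) pL pH j < c →
      ∃ σstar : Fin m → ℝ, IsEquilibrium ρ c n pL pH σstar ∧
        ∀ s : Fin m, σstar s ≤ (if s < j then (0:ℝ) else 1)) ∧
    (∀ hj : 1 ≤ j.val,
      c < post (interim ρ n pL pH (fun i => if i < j then (0:ℝ) else 1)) pL pH
        ⟨j.val - 1, lt_of_le_of_lt (Nat.sub_le _ _) j.isLt⟩ →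
      ∃ σstar : Fin m → ℝ, IsEquilibrium ρ c n pL pH σstar ∧
        ∀ s : Fin m, (if s < j then (0:ℝ) else 1) ≤ σstar s) := by
  have hthr : (fun i : Fin m => if i < j then (0:ℝ) else 1) = EqAux.thr m j.val := by
    funext i; simp only [EqAux.thr, Fin.lt_def]
  constructor
  · intro h
    rw [hthr] at h
    obtain ⟨σs, heq, hle⟩ :=
      EqAux.down hρ hn hE m j.val j.isLt (by omega) h
    refine ⟨σs, heq, fun s => ?_⟩
    show σs s ≤ (fun i : Fin m => if i < j then (0:ℝ) else 1) s
    rw [hthr]; exact hle s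
  · intro hj h
    rw [hthr] at h
    obtain ⟨σs, heq, hge⟩ :=
      EqAux.up hρ hn hE j.val hj j.isLt.le (lt_of_le_of_lt (Nat.sub_le _ _) j.isLt) h
    refine ⟨σs, heq, fun s => ?_⟩
    show (fun i : Fin m => if i < j then (0:ℝ) else 1) s ≤ σs s
    rw [hthr]; exact hge s
end
end
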